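/- Let k ≥ 3 and let G be a connected k-regular graph of order n and diameter 2 that is triangle-free and irreducible, with adjacency matrix A, and let D be the distance matrix of the bipartite double cover B(G). Then every real eigenvalue μ of D (i.e., every μ ∈ ℝ for which there exists a nonzero vector u ∈ ℝ^{V ⊕ V} with D·u = μ·u) satisfies: μ = 5n, or μ = 4k - n - 4, or μ = 0, or μ = 4λ - 4 for some real eigenvalue λ of A. -/

import Mathlib

open SimpleGraph

/-- The bipartite double cover of a graph `G`, on vertex set `V ⊕ V`. -/
def bipartiteDoubleCover {V : Type*} (G : SimpleGraph V) : SimpleGraph (V ⊕ V) where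
  Adj x y :=
    match x, y with
    | Sum.inl u, Sum.inr v => G.Adj u v
    | Sum.inr u, Sum.inl v => G.Adj u v
    | _, _ => False
  symm := ⟨by
    rintro (u | u) (v | v) h
    · exact h.elim
    · exact h.symm
    · exact h.symm
    · exact h.elim⟩
  loopless := ⟨by
    rintro (u | u) h
    · exact h
    · exact h⟩

/-- The distance matrix of a graph `H`, over the reals. -/
noncomputable def distMatrix {W : Type*} (H : SimpleGraph W) : Matrix W W ℝ :=
  Matrix.of fun x y => (H.dist x y : ℝ)

section aux
variable {V : Type*} (G : SimpleGraph V)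

lemma bdc_adj_inl_inr {u v : V} (h : G.Adj u v) :
    (_root_.bipartiteDoubleCover G).Adj (Sum.inl u) (Sum.inr v) := h

lemma bdc_adj_inr_inl {u v : V} (h : G.Adj u v) :
    (_root_.bipartiteDoubleCover G).Adj (Sum.inr u) (Sum.inl v) := h

variable {G}

lemma bdc_isLeft_ne {x y : V ⊕ V} (h : (_root_.bipartiteDoubleCover G).Adj x y) :
    x.isLeft = !y.isLeft := by
  rcases x with u | u <;> rcases y with v | v
  · exact h.elim
  · rfl
  · rfl
  · exact h.elim

lemma bdc_walk_parity {x y : V ⊕ V} (p : (_root_.bipartiteDoubleCover G).Walk x y) :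
    Even p.length ↔ x.isLeft = y.isLeft := by
  induction p with
  | nil => simp
  | @cons a b c h q ih =>
    have hab := bdc_isLeft_ne h
    simp only [Walk.length_cons, Nat.even_add_one, ih, hab]
    cases b.isLeft <;> cases c.isLeft <;> simp

def bdcProj : _root_.bipartiteDoubleCover G →g G where
  toFun := Sum.elim id id
  map_rel' := by
    rintro (u | u) (v | v) h
    · exact h.elim
    · exact h
    · exact h
    · exact h.elim

lemma walk_len2 {W : Type*} {H : SimpleGraph W} {u v : W} (p : H.Walk u v)
    (hp : p.length = 2) : ∃ x, H.Adj u x ∧ H.Adj x v := by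
  refine ⟨p.getVert 1, ?_, ?_⟩
  · have := p.adj_getVert_succ (i := 0) (by omega)
    simpa using this
  · have := p.adj_getVert_succ (i := 1) (by omega)
    have h2 : p.getVert 2 = v := by rw [← hp]; exact p.getVert_length
    rwa [h2] at this

lemma walk_len3 {W : Type*} {H : SimpleGraph W} {u v : W} (p : H.Walk u v)
    (hp : p.length = 3) : ∃ x y, H.Adj u x ∧ H.Adj x y ∧ H.Adj y v := by
  refine ⟨p.getVert 1, p.getVert 2, ?_, ?_, ?_⟩
  · have := p.adj_getVert_succ (i := 0) (by omega)
    simpa using this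
  · exact p.adj_getVert_succ (i := 1) (by omega)
  · have := p.adj_getVert_succ (i := 2) (by omega)
    have h3 : p.getVert 3 = v := by rw [← hp]; exact p.getVert_length
    rwa [h3] at this

end aux

section aux2
variable {V : Type*} [Fintype V] {G : SimpleGraph V} [DecidableRel G.Adj] {k : ℕ}

lemma dist_le_two (hconn : G.Connected) (hdiam : G.diam = 2) (u v : V) :
    G.dist u v ≤ 2 := by
  have h : G.ediam ≠ ⊤ := ediam_ne_top_of_diam_ne_zero (by rw [hdiam]; omega)
  have := G.dist_le_diam h (u := u) (v := v)
  omega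

lemma dist_two (hconn : G.Connected) (hdiam : G.diam = 2) {u v : V}
    (hne : u ≠ v) (hnadj : ¬G.Adj u v) : G.dist u v = 2 := by
  have h2 := dist_le_two hconn hdiam u v
  have h0 : G.dist u v ≠ 0 := (hconn.pos_dist_of_ne hne).ne'
  have h1 : G.dist u v ≠ 1 := fun h => hnadj (dist_eq_one_iff_adj.mp h)
  omega

lemma midpt (hconn : G.Connected) {u v : V} (h : G.dist u v = 2) :
    ∃ p, G.Adj u p ∧ G.Adj p v := by
  obtain ⟨p, hp⟩ := hconn.exists_walk_length_eq_dist u v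
  exact walk_len2 p (hp.trans h)

lemma lemL (hconn : G.Connected) (hdiam : G.diam = 2)
    (hreg : G.IsRegularOfDegree k)
    (hirr : ∀ u v : V, G.neighborSet u = G.neighborSet v → u = v)
    {u c : V} (h : G.dist u c = 2) : ∃ b, G.Adj c b ∧ G.dist u b = 2 := by
  by_contra hcon
  push_neg at hcon
  have hsub : G.neighborFinset c ⊆ G.neighborFinset u := by
    intro b hb
    rw [mem_neighborFinset] at hb ⊢
    have hbu : b ≠ u := by
      rintro rfl
      rw [G.dist_comm, dist_eq_one_iff_adj.mpr hb] at h
      omega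
    have hdb : G.dist u b ≤ 2 := dist_le_two hconn hdiam u b
    have h0 : G.dist u b ≠ 0 := (hconn.pos_dist_of_ne (Ne.symm hbu)).ne'
    have h2 : G.dist u b ≠ 2 := hcon b hb
    have : G.dist u b = 1 := by omega
    exact dist_eq_one_iff_adj.mp this
  have hcardc : (G.neighborFinset c).card = k := hreg c
  have hcardu : (G.neighborFinset u).card = k := hreg u
  have heq : G.neighborFinset c = G.neighborFinset u :=
    Finset.eq_of_subset_of_card_le hsub (by omega)
  have : c = u := hirr c u (Set.toFinset_inj.mp heq)
  rw [this, G.dist_self] at h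
  omega

lemma exists_nb (hk : 3 ≤ k) (hreg : G.IsRegularOfDegree k) (v : V) :
    ∃ w, G.Adj v w := by
  have hc : (G.neighborFinset v).card = k := hreg v
  have hpos : 0 < (G.neighborFinset v).card := by omega
  obtain ⟨w, hw⟩ := Finset.card_pos.mp hpos
  exact ⟨w, (mem_neighborFinset G v w).mp hw⟩

lemma exists_nb_ne (hk : 3 ≤ k) (hreg : G.IsRegularOfDegree k) (v u : V) :
    ∃ c, G.Adj v c ∧ c ≠ u := by
  have hc : (G.neighborFinset v).card = k := hreg v
  have hpos : 1 < (G.neighborFinset v).card := by omega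
  obtain ⟨c, hcm, hcu⟩ := Finset.exists_mem_ne hpos u
  exact ⟨c, (mem_neighborFinset G v c).mp hcm, hcu⟩

end aux2

section aux3
variable {V : Type*} [Fintype V] {G : SimpleGraph V} [DecidableRel G.Adj] {k : ℕ}

def bdcSwap : _root_.bipartiteDoubleCover G →g _root_.bipartiteDoubleCover G where
  toFun := Sum.swap
  map_rel' := by
    rintro (u | u) (v | v) h
    · exact h.elim
    · exact h
    · exact h
    · exact h.elim

lemma bdist_swap_le (x y : V ⊕ V) :
    (_root_.bipartiteDoubleCover G).dist (Sum.swap x) (Sum.swap y) ≤ (_root_.bipartiteDoubleCover G).dist x y := by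
  by_cases hr : (_root_.bipartiteDoubleCover G).Reachable x y
  · obtain ⟨q, hq⟩ := hr.exists_walk_length_eq_dist
    calc (_root_.bipartiteDoubleCover G).dist (Sum.swap x) (Sum.swap y) ≤ (q.map bdcSwap).length := SimpleGraph.dist_le _
    _ = (_root_.bipartiteDoubleCover G).dist x y := by rw [SimpleGraph.Walk.length_map]; exact hq
  · rw [SimpleGraph.dist_eq_zero_of_not_reachable hr,
      SimpleGraph.dist_eq_zero_of_not_reachable]
    intro hr'
    have h2 := hr'.map (bdcSwap (G := G))
    have hx : bdcSwap (G := G) x.swap = x := Sum.swap_swap x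
    have hy : bdcSwap (G := G) y.swap = y := Sum.swap_swap y
    rw [hx, hy] at h2
    exact hr h2

lemma bdist_swap (x y : V ⊕ V) :
    (_root_.bipartiteDoubleCover G).dist (Sum.swap x) (Sum.swap y) = (_root_.bipartiteDoubleCover G).dist x y := by
  refine le_antisymm (bdist_swap_le x y) ?_
  have := bdist_swap_le (G := G) (Sum.swap x) (Sum.swap y)
  rwa [Sum.swap_swap, Sum.swap_swap] at this

variable (hk : 3 ≤ k) (hconn : G.Connected) (hreg : G.IsRegularOfDegree k)
  (hdiam : G.diam = 2)
  (htf : ∀ u v : V, G.Adj u v → ∀ x : V, ¬(G.Adj u x ∧ G.Adj v x))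
  (hirr : ∀ u v : V, G.neighborSet u = G.neighborSet v → u = v)

include hk hconn hreg hdiam htf hirr in
lemma bdist_ll_adj {u v : V} (huv : G.Adj u v) :
    (_root_.bipartiteDoubleCover G).dist (Sum.inl u) (Sum.inl v) = 4 := by
  obtain ⟨c, hvc, hcu⟩ := exists_nb_ne hk hreg v u
  have hnuc : ¬G.Adj u c := fun h => htf u v huv c ⟨h, hvc⟩
  have hd : G.dist u c = 2 := dist_two hconn hdiam (Ne.symm hcu) hnuc
  obtain ⟨b, hcb, hub⟩ := lemL hconn hdiam hreg hirr hd
  obtain ⟨p, hup, hpb⟩ := midpt hconn hub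
  let W : (_root_.bipartiteDoubleCover G).Walk (Sum.inl u) (Sum.inl v) :=
    .cons (bdc_adj_inl_inr G hup) (.cons (bdc_adj_inr_inl G hpb)
      (.cons (bdc_adj_inl_inr G hcb.symm) (.cons (bdc_adj_inr_inl G hvc.symm) .nil)))
  have hreach : (_root_.bipartiteDoubleCover G).Reachable (Sum.inl u) (Sum.inl v) := ⟨W⟩
  have hle : (_root_.bipartiteDoubleCover G).dist (Sum.inl u) (Sum.inl v) ≤ 4 := by
    have := SimpleGraph.dist_le W
    simpa [W] using this
  have hne : (Sum.inl u : V ⊕ V) ≠ Sum.inl v := by simpa using huv.ne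
  obtain ⟨q, hq⟩ := hreach.exists_walk_length_eq_dist
  have heven : Even q.length := (bdc_walk_parity q).mpr rfl
  have h0 : q.length ≠ 0 := by rw [hq]; exact (hreach.pos_dist_of_ne hne).ne'
  have h2 : q.length ≠ 2 := by
    intro h
    obtain ⟨x, hx1, hx2⟩ := walk_len2 (q.map bdcProj)
      (by rw [SimpleGraph.Walk.length_map]; exact h)
    exact htf u v huv x ⟨hx1, hx2.symm⟩
  obtain ⟨m, hm⟩ := heven
  omega

include hconn hdiam in
lemma bdist_ll_two {u v : V} (hne : u ≠ v) (hnadj : ¬G.Adj u v) :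
    (_root_.bipartiteDoubleCover G).dist (Sum.inl u) (Sum.inl v) = 2 := by
  obtain ⟨p, hup, hpv⟩ := midpt hconn (dist_two hconn hdiam hne hnadj)
  let W : (_root_.bipartiteDoubleCover G).Walk (Sum.inl u) (Sum.inl v) :=
    .cons (bdc_adj_inl_inr G hup) (.cons (bdc_adj_inr_inl G hpv) .nil)
  have hreach : (_root_.bipartiteDoubleCover G).Reachable (Sum.inl u) (Sum.inl v) := ⟨W⟩
  have hle : (_root_.bipartiteDoubleCover G).dist (Sum.inl u) (Sum.inl v) ≤ 2 := by
    have := SimpleGraph.dist_le W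
    simpa [W] using this
  have hne' : (Sum.inl u : V ⊕ V) ≠ Sum.inl v := by simpa using hne
  obtain ⟨q, hq⟩ := hreach.exists_walk_length_eq_dist
  have heven : Even q.length := (bdc_walk_parity q).mpr rfl
  have h0 : q.length ≠ 0 := by rw [hq]; exact (hreach.pos_dist_of_ne hne').ne'
  obtain ⟨m, hm⟩ := heven
  omega

lemma bdist_lr_adj {u v : V} (huv : G.Adj u v) :
    (_root_.bipartiteDoubleCover G).dist (Sum.inl u) (Sum.inr v) = 1 :=
  SimpleGraph.dist_eq_one_iff_adj.mpr (bdc_adj_inl_inr G huv)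

include hconn hreg hdiam hirr in
lemma bdist_lr_two {u v : V} (hne : u ≠ v) (hnadj : ¬G.Adj u v) :
    (_root_.bipartiteDoubleCover G).dist (Sum.inl u) (Sum.inr v) = 3 := by
  have hd : G.dist v u = 2 := by
    rw [SimpleGraph.dist_comm]; exact dist_two hconn hdiam hne hnadj
  obtain ⟨w, huw, hvw⟩ := lemL hconn hdiam hreg hirr hd
  obtain ⟨x, hwx, hxv⟩ := midpt hconn (by rw [SimpleGraph.dist_comm]; exact hvw)
  let W : (_root_.bipartiteDoubleCover G).Walk (Sum.inl u) (Sum.inr v) :=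
    .cons (bdc_adj_inl_inr G huw) (.cons (bdc_adj_inr_inl G hwx)
      (.cons (bdc_adj_inl_inr G hxv) .nil))
  have hreach : (_root_.bipartiteDoubleCover G).Reachable (Sum.inl u) (Sum.inr v) := ⟨W⟩
  have hle : (_root_.bipartiteDoubleCover G).dist (Sum.inl u) (Sum.inr v) ≤ 3 := by
    have := SimpleGraph.dist_le W
    simpa [W] using this
  obtain ⟨q, hq⟩ := hreach.exists_walk_length_eq_dist
  have hodd : ¬Even q.length := by
    intro h
    have := (bdc_walk_parity q).mp h
    simp at this
  have h1 : q.length ≠ 1 := by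
    intro h
    have hd1 : (_root_.bipartiteDoubleCover G).dist (Sum.inl u) (Sum.inr v) = 1 := by rw [← hq, h]
    exact hnadj ((SimpleGraph.dist_eq_one_iff_adj (G := _root_.bipartiteDoubleCover G)).mp hd1)
  rw [Nat.not_even_iff] at hodd
  omega

include hk hconn hreg hdiam htf hirr in
lemma bdist_lr_self (u : V) :
    (_root_.bipartiteDoubleCover G).dist (Sum.inl u) (Sum.inr u) = 5 := by
  obtain ⟨v0, huv0⟩ := exists_nb hk hreg u
  obtain ⟨c, hv0c, hcu⟩ := exists_nb_ne hk hreg v0 u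
  have hnuc : ¬G.Adj u c := fun h => htf u v0 huv0 c ⟨h, hv0c⟩
  have hd : G.dist u c = 2 := dist_two hconn hdiam (Ne.symm hcu) hnuc
  obtain ⟨b, hcb, hub⟩ := lemL hconn hdiam hreg hirr hd
  obtain ⟨p, hup, hpb⟩ := midpt hconn hub
  obtain ⟨x, hcx, hxu⟩ := midpt hconn (by rw [SimpleGraph.dist_comm]; exact hd)
  let W : (_root_.bipartiteDoubleCover G).Walk (Sum.inl u) (Sum.inr u) :=
    .cons (bdc_adj_inl_inr G hup) (.cons (bdc_adj_inr_inl G hpb)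
      (.cons (bdc_adj_inl_inr G hcb.symm) (.cons (bdc_adj_inr_inl G hcx)
        (.cons (bdc_adj_inl_inr G hxu) .nil))))
  have hreach : (_root_.bipartiteDoubleCover G).Reachable (Sum.inl u) (Sum.inr u) := ⟨W⟩
  have hle : (_root_.bipartiteDoubleCover G).dist (Sum.inl u) (Sum.inr u) ≤ 5 := by
    have := SimpleGraph.dist_le W
    simpa [W] using this
  obtain ⟨q, hq⟩ := hreach.exists_walk_length_eq_dist
  have hodd : ¬Even q.length := by
    intro h
    have := (bdc_walk_parity q).mp h
    simp at this
  have h1 : q.length ≠ 1 := by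
    intro h
    have hd1 : (_root_.bipartiteDoubleCover G).dist (Sum.inl u) (Sum.inr u) = 1 := by rw [← hq, h]
    exact (G.loopless.irrefl u) ((SimpleGraph.dist_eq_one_iff_adj (G := _root_.bipartiteDoubleCover G)).mp hd1)
  have h3 : q.length ≠ 3 := by
    intro h
    obtain ⟨a, b', ha, hab, hbu⟩ := walk_len3 (q.map bdcProj)
      (by rw [SimpleGraph.Walk.length_map]; exact h)
    exact htf u a ha b' ⟨hbu.symm, hab⟩
  rw [Nat.not_even_iff] at hodd
  omega

end aux3

section aux4
variable {V : Type*} [Fintype V] [DecidableEq V] {G : SimpleGraph V} [DecidableRel G.Adj] {k : ℕ}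
variable (hk : 3 ≤ k) (hconn : G.Connected) (hreg : G.IsRegularOfDegree k)
  (hdiam : G.diam = 2)
  (htf : ∀ u v : V, G.Adj u v → ∀ x : V, ¬(G.Adj u x ∧ G.Adj v x))
  (hirr : ∀ u v : V, G.neighborSet u = G.neighborSet v → u = v)

include hk hconn hreg hdiam htf hirr in
lemma entry_ll (v w : V) :
    distMatrix (_root_.bipartiteDoubleCover G) (Sum.inl v) (Sum.inl w) =
      2 * G.adjMatrix ℝ v w + 2 - 2 * (if v = w then 1 else 0) := by
  rcases eq_or_ne v w with rfl | hne
  · simp [distMatrix, SimpleGraph.dist_self]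
  · by_cases hadj : G.Adj v w
    · have h := bdist_ll_adj hk hconn hreg hdiam htf hirr hadj
      simp [distMatrix, h, hne, hadj]
      norm_num
    · have h := bdist_ll_two hconn hdiam hne hadj
      simp [distMatrix, h, hne, hadj]

include hk hconn hreg hdiam htf hirr in
lemma entry_lr (v w : V) :
    distMatrix (_root_.bipartiteDoubleCover G) (Sum.inl v) (Sum.inr w) =
      -2 * G.adjMatrix ℝ v w + 3 + 2 * (if v = w then 1 else 0) := by
  rcases eq_or_ne v w with rfl | hne
  · have h := bdist_lr_self hk hconn hreg hdiam htf hirr v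
    simp [distMatrix, h]
    norm_num
  · by_cases hadj : G.Adj v w
    · have h := bdist_lr_adj (G := G) hadj
      simp [distMatrix, h, hne, hadj]
      norm_num
    · have h := bdist_lr_two hconn hreg hdiam hirr hne hadj
      simp [distMatrix, h, hne, hadj]

include hk hconn hreg hdiam htf hirr in
lemma entry_rr (v w : V) :
    distMatrix (_root_.bipartiteDoubleCover G) (Sum.inr v) (Sum.inr w) =
      2 * G.adjMatrix ℝ v w + 2 - 2 * (if v = w then 1 else 0) := by
  have hsw : (_root_.bipartiteDoubleCover G).dist (Sum.inr v) (Sum.inr w) =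
      (_root_.bipartiteDoubleCover G).dist (Sum.inl v) (Sum.inl w) :=
    bdist_swap (Sum.inl v) (Sum.inl w)
  have := entry_ll hk hconn hreg hdiam htf hirr v w
  simpa [distMatrix, hsw] using this

include hk hconn hreg hdiam htf hirr in
lemma entry_rl (v w : V) :
    distMatrix (_root_.bipartiteDoubleCover G) (Sum.inr v) (Sum.inl w) =
      -2 * G.adjMatrix ℝ v w + 3 + 2 * (if v = w then 1 else 0) := by
  have hsw : (_root_.bipartiteDoubleCover G).dist (Sum.inr v) (Sum.inl w) =
      (_root_.bipartiteDoubleCover G).dist (Sum.inl v) (Sum.inr w) :=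
    bdist_swap (Sum.inl v) (Sum.inr w)
  have := entry_lr hk hconn hreg hdiam htf hirr v w
  simpa [distMatrix, hsw] using this

end aux4

section aux5
variable {V : Type*} [Fintype V] [DecidableEq V] {G : SimpleGraph V}
  [DecidableRel G.Adj] {k : ℕ}

lemma expandP (v : V) (x : V → ℝ) :
    ∑ w, (2 * G.adjMatrix ℝ v w + 2 - 2 * (if v = w then 1 else 0)) * x w
      = 2 * ((G.adjMatrix ℝ).mulVec x v) + 2 * (∑ w, x w) - 2 * x v := by
  have key : ∀ w : V, (2 * G.adjMatrix ℝ v w + 2 - 2 * (if v = w then 1 else 0)) * x w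
      = 2 * (G.adjMatrix ℝ v w * x w) + 2 * x w - (if v = w then 2 * x w else 0) := by
    intro w; split_ifs <;> ring
  rw [Finset.sum_congr rfl fun w _ => key w, Finset.sum_sub_distrib,
    Finset.sum_add_distrib, Finset.sum_ite_eq, Matrix.mulVec, dotProduct,
    ← Finset.mul_sum, ← Finset.mul_sum]
  simp

lemma expandQ (v : V) (x : V → ℝ) :
    ∑ w, (-2 * G.adjMatrix ℝ v w + 3 + 2 * (if v = w then 1 else 0)) * x w
      = -2 * ((G.adjMatrix ℝ).mulVec x v) + 3 * (∑ w, x w) + 2 * x v := by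
  have key : ∀ w : V, (-2 * G.adjMatrix ℝ v w + 3 + 2 * (if v = w then 1 else 0)) * x w
      = -2 * (G.adjMatrix ℝ v w * x w) + 3 * x w + (if v = w then 2 * x w else 0) := by
    intro w; split_ifs <;> ring
  rw [Finset.sum_congr rfl fun w _ => key w, Finset.sum_add_distrib,
    Finset.sum_add_distrib, Finset.sum_ite_eq, Matrix.mulVec, dotProduct]
  simp only [Finset.mem_univ, if_true, neg_mul, Finset.sum_neg_distrib, ← Finset.mul_sum]

lemma colsum (hreg : G.IsRegularOfDegree k) (x : V → ℝ) :
    ∑ v, (G.adjMatrix ℝ).mulVec x v = (k : ℝ) * ∑ w, x w := by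
  have hrow : ∀ w : V, ∑ v, G.adjMatrix ℝ v w = (k : ℝ) := by
    intro w
    have h1 : ∀ v, G.adjMatrix ℝ v w = G.adjMatrix ℝ w v := by
      intro v; simp [SimpleGraph.adjMatrix_apply, SimpleGraph.adj_comm]
    rw [Finset.sum_congr rfl fun v _ => h1 v]
    have := SimpleGraph.adjMatrix_mulVec_const_apply_of_regular (α := ℝ) (a := (1 : ℝ))
      hreg (v := w)
    simpa only [Matrix.mulVec, dotProduct, Function.const_apply, mul_one] using this
  calc ∑ v, (G.adjMatrix ℝ).mulVec x v
      = ∑ v, ∑ w, G.adjMatrix ℝ v w * x w := by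
        refine Finset.sum_congr rfl fun v _ => ?_
        rw [Matrix.mulVec, dotProduct]
    _ = ∑ w, (∑ v, G.adjMatrix ℝ v w) * x w := by
        rw [Finset.sum_comm]
        exact Finset.sum_congr rfl fun w _ => by rw [Finset.sum_mul]
    _ = ∑ w, (k : ℝ) * x w := Finset.sum_congr rfl fun w _ => by rw [hrow w]
    _ = (k : ℝ) * ∑ w, x w := by rw [Finset.mul_sum]

end aux5

theorem stmt6 {V : Type*} [Fintype V] (G : SimpleGraph V)
    [DecidableRel G.Adj] (k : ℕ) (hk : 3 ≤ k)
    (hconn : G.Connected) (hreg : G.IsRegularOfDegree k) (hdiam : G.diam = 2)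
    (htf : ∀ u v : V, G.Adj u v → ∀ x : V, ¬(G.Adj u x ∧ G.Adj v x))
    (hirr : ∀ u v : V, G.neighborSet u = G.neighborSet v → u = v)
    (μ : ℝ) (hμ : ∃ u : V ⊕ V → ℝ, u ≠ 0 ∧
      (distMatrix (_root_.bipartiteDoubleCover G)).mulVec u = μ • u) :
    μ = 5 * (Fintype.card V : ℝ) ∨
    μ = 4 * (k : ℝ) - (Fintype.card V : ℝ) - 4 ∨
    μ = 0 ∨
    ∃ lam : ℝ, (∃ w : V → ℝ, w ≠ 0 ∧ (G.adjMatrix ℝ).mulVec w = lam • w) ∧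
      μ = 4 * lam - 4 := by
  classical
  obtain ⟨u, hu0, heq⟩ := hμ
  set A := G.adjMatrix ℝ with hA
  set a : V → ℝ := fun v => u (Sum.inl v) with ha
  set b : V → ℝ := fun v => u (Sum.inr v) with hb
  set Sa : ℝ := ∑ w, a w with hSa
  set Sb : ℝ := ∑ w, b w with hSb
  -- the two block row equations
  have e1 : ∀ v, 2 * (A.mulVec a v) + 2 * Sa - 2 * a v
      + (-2 * (A.mulVec b v) + 3 * Sb + 2 * b v) = μ * a v := by
    intro v
    have h := congrFun heq (Sum.inl v)
    have hsplit : (distMatrix (_root_.bipartiteDoubleCover G)).mulVec u (Sum.inl v)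
        = (∑ w, distMatrix (_root_.bipartiteDoubleCover G) (Sum.inl v) (Sum.inl w) * a w)
        + (∑ w, distMatrix (_root_.bipartiteDoubleCover G) (Sum.inl v) (Sum.inr w) * b w) := by
      rw [Matrix.mulVec, dotProduct]
      exact Fintype.sum_sum_type _
    have hP : ∑ w, distMatrix (_root_.bipartiteDoubleCover G) (Sum.inl v) (Sum.inl w) * a w
        = ∑ w, (2 * A v w + 2 - 2 * (if v = w then 1 else 0)) * a w :=
      Finset.sum_congr rfl fun w _ => by rw [entry_ll hk hconn hreg hdiam htf hirr v w]
    have hQ : ∑ w, distMatrix (_root_.bipartiteDoubleCover G) (Sum.inl v) (Sum.inr w) * b w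
        = ∑ w, (-2 * A v w + 3 + 2 * (if v = w then 1 else 0)) * b w :=
      Finset.sum_congr rfl fun w _ => by rw [entry_lr hk hconn hreg hdiam htf hirr v w]
    rw [hsplit, hP, hQ, expandP, expandQ] at h
    simp only [Pi.smul_apply, smul_eq_mul] at h
    exact h
  have e2 : ∀ v, -2 * (A.mulVec a v) + 3 * Sa + 2 * a v
      + (2 * (A.mulVec b v) + 2 * Sb - 2 * b v) = μ * b v := by
    intro v
    have h := congrFun heq (Sum.inr v)
    have hsplit : (distMatrix (_root_.bipartiteDoubleCover G)).mulVec u (Sum.inr v)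
        = (∑ w, distMatrix (_root_.bipartiteDoubleCover G) (Sum.inr v) (Sum.inl w) * a w)
        + (∑ w, distMatrix (_root_.bipartiteDoubleCover G) (Sum.inr v) (Sum.inr w) * b w) := by
      rw [Matrix.mulVec, dotProduct]
      exact Fintype.sum_sum_type _
    have hP : ∑ w, distMatrix (_root_.bipartiteDoubleCover G) (Sum.inr v) (Sum.inr w) * b w
        = ∑ w, (2 * A v w + 2 - 2 * (if v = w then 1 else 0)) * b w :=
      Finset.sum_congr rfl fun w _ => by rw [entry_rr hk hconn hreg hdiam htf hirr v w]
    have hQ : ∑ w, distMatrix (_root_.bipartiteDoubleCover G) (Sum.inr v) (Sum.inl w) * a w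
        = ∑ w, (-2 * A v w + 3 + 2 * (if v = w then 1 else 0)) * a w :=
      Finset.sum_congr rfl fun w _ => by rw [entry_rl hk hconn hreg hdiam htf hirr v w]
    rw [hsplit, hQ, hP, expandP, expandQ] at h
    simp only [Pi.smul_apply, smul_eq_mul] at h
    exact h
  by_cases hdd : a - b = 0
  · -- symmetric part
    have hab : ∀ v, a v = b v := fun v => by
      have := congrFun hdd v; simpa [sub_eq_zero] using this
    have hs : ∀ v, 5 * Sa + 5 * Sb = μ * (a v + b v) := by
      intro v
      linear_combination e1 v + e2 v
    by_cases hS : Sa + Sb = 0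
    · right; right; left
      have hssne : ∃ v, a v + b v ≠ 0 := by
        by_contra hcon
        push_neg at hcon
        apply hu0
        funext x
        rcases x with v | v
        · have h1 := hcon v
          have h2 := hab v
          have : a v = 0 := by linarith
          simpa [ha] using this
        · have h1 := hcon v
          have h2 := hab v
          have : b v = 0 := by linarith
          simpa [hb] using this
      obtain ⟨v, hv⟩ := hssne
      have := hs v
      rw [show 5 * Sa + 5 * Sb = 5 * (Sa + Sb) by ring, hS] at this
      simp only [mul_zero] at this
      rcases mul_eq_zero.mp this.symm with h | h
      · exact h
      · exact absurd h hv
    · left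
      have hsum : ∑ _v : V, (5 * Sa + 5 * Sb) = ∑ v, μ * (a v + b v) :=
        Finset.sum_congr rfl fun v _ => hs v
      rw [Finset.sum_const, Finset.card_univ, nsmul_eq_mul] at hsum
      have hr : ∑ v, μ * (a v + b v) = μ * (Sa + Sb) := by
        rw [← Finset.mul_sum, Finset.sum_add_distrib]
      rw [hr] at hsum
      have : (5 * (Fintype.card V : ℝ)) * (Sa + Sb) = μ * (Sa + Sb) := by
        linear_combination hsum
      exact (mul_right_cancel₀ hS this).symm
  · -- antisymmetric part
    set dd : V → ℝ := a - b with hddn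
    set Sd : ℝ := ∑ v, dd v with hSd
    have hAd : ∀ v, 4 * (A.mulVec dd v) - Sd - 4 * dd v = μ * dd v := by
      intro v
      have hmv : A.mulVec dd v = A.mulVec a v - A.mulVec b v := by
        rw [hddn, Matrix.mulVec_sub]; rfl
      have hSdd : Sd = Sa - Sb := by
        rw [hSd, hSa, hSb, ← Finset.sum_sub_distrib]; rfl
      have hddv : dd v = a v - b v := rfl
      rw [hmv, hSdd, hddv]
      linear_combination e1 v - e2 v
    by_cases hSd0 : Sd = 0
    · right; right; right
      refine ⟨(μ + 4) / 4, ⟨dd, hdd, ?_⟩, by ring⟩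
      funext v
      have h := hAd v
      rw [hSd0] at h
      show A.mulVec dd v = ((μ + 4) / 4) • dd v
      rw [smul_eq_mul]
      linear_combination h / 4
    · right; left
      have hsum : ∑ v, (4 * (A.mulVec dd v) - Sd - 4 * dd v) = ∑ v, μ * dd v :=
        Finset.sum_congr rfl fun v _ => hAd v
      rw [Finset.sum_sub_distrib, Finset.sum_sub_distrib, ← Finset.mul_sum,
        ← Finset.mul_sum, ← Finset.mul_sum, Finset.sum_const, Finset.card_univ,
        nsmul_eq_mul, colsum hreg] at hsum
      have : (4 * (k : ℝ) - (Fintype.card V : ℝ) - 4) * Sd = μ * Sd := by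
        rw [hSd] at hSd0 ⊢
        linear_combination hsum
      exact (mul_right_cancel₀ hSd0 this).symm
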